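/- arXiv:0810.1566 — 2 statements merged into one kernel-verified Lean document; each statement's English description precedes it below -/
import Mathlib

section
/- There is no harmonic function u : ℝ² → ℝ on ℝ² with ∫_{ℝ²} e^{2u} dz ≤ 4π. -/
set_option linter.unusedSectionVars false

open Real MeasureTheory

noncomputable def lap (u : ℝ × ℝ → ℝ) (z : ℝ × ℝ) : ℝ :=
  fderiv ℝ (fun w => fderiv ℝ u w (1, 0)) z (1, 0) +
  fderiv ℝ (fun w => fderiv ℝ u w (0, 1)) z (0, 1)

section aux
variable {u : ℝ × ℝ → ℝ} (hu : ContDiff ℝ 2 u)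

noncomputable def gfun (u : ℝ × ℝ → ℝ) : ℂ → ℂ := fun z =>
  (fderiv ℝ u (z.re, z.im) (1, 0) : ℂ) - (fderiv ℝ u (z.re, z.im) (0, 1) : ℂ) * Complex.I

include hu

lemma hD1 : ContDiff ℝ 1 (fderiv ℝ u) := hu.fderiv_right (by norm_num)

lemma hux_hasFDeriv (w : ℝ × ℝ) (v : ℝ × ℝ) :
    HasFDerivAt (fun w => fderiv ℝ u w v)
      ((ContinuousLinearMap.apply ℝ ℝ v).comp (fderiv ℝ (fderiv ℝ u) w)) w := by
  exact (ContinuousLinearMap.apply ℝ ℝ v).hasFDerivAt.comp w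
    (((hD1 hu).differentiable one_ne_zero w).hasFDerivAt)

lemma hsymm (w v v' : ℝ × ℝ) :
    fderiv ℝ (fderiv ℝ u) w v v' = fderiv ℝ (fderiv ℝ u) w v' v :=
  (hu.contDiffAt.isSymmSndFDerivAt (by norm_num)) v v'

lemma lap_eq (w : ℝ × ℝ) : lap u w =
    fderiv ℝ (fderiv ℝ u) w (1, 0) (1, 0) + fderiv ℝ (fderiv ℝ u) w (0, 1) (0, 1) := by
  rw [lap, (hux_hasFDeriv hu w (1,0)).fderiv, (hux_hasFDeriv hu w (0,1)).fderiv]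
  rfl

end aux

section ent
variable {u : ℝ × ℝ → ℝ} (hu : ContDiff ℝ 2 u) (hlap : ∀ z, lap u z = 0)
include hu hlap

lemma gfun_entire : Differentiable ℂ (gfun u) := by
  intro z₀
  set w₀ : ℝ × ℝ := (z₀.re, z₀.im) with hw₀
  set D2 := fderiv ℝ (fderiv ℝ u) w₀ with hD2
  set a : ℝ := D2 (1,0) (1,0) with ha
  set b : ℝ := D2 (1,0) (0,1) with hb
  set c : ℂ := (a : ℂ) - (b : ℂ) * Complex.I with hc
  have h1 : HasFDerivAt (fun z : ℂ => ((z.re, z.im) : ℝ × ℝ))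
      (Complex.equivRealProdCLM.toContinuousLinearMap) z₀ :=
    Complex.equivRealProdCLM.toContinuousLinearMap.hasFDerivAt
  have hux := (hux_hasFDeriv hu w₀ (1,0)).comp z₀ h1
  have huy := (hux_hasFDeriv hu w₀ (0,1)).comp z₀ h1
  have h2 : HasFDerivAt (fun z : ℂ => (fderiv ℝ u (z.re, z.im) (1,0) : ℂ))
      (Complex.ofRealCLM.comp (((ContinuousLinearMap.apply ℝ ℝ ((1:ℝ),(0:ℝ))).comp D2).comp
        Complex.equivRealProdCLM.toContinuousLinearMap)) z₀ :=
    Complex.ofRealCLM.hasFDerivAt.comp z₀ hux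
  have h3 : HasFDerivAt (fun z : ℂ => (fderiv ℝ u (z.re, z.im) (0,1) : ℂ) * Complex.I)
      ((((ContinuousLinearMap.id ℝ ℝ).smulRight Complex.I).comp
        ((((ContinuousLinearMap.apply ℝ ℝ ((0:ℝ),(1:ℝ))).comp D2).comp
        Complex.equivRealProdCLM.toContinuousLinearMap)))) z₀ := by
    have h := ((ContinuousLinearMap.id ℝ ℝ).smulRight Complex.I).hasFDerivAt.comp z₀ huy
    have : (fun z : ℂ => (fderiv ℝ u (z.re, z.im) (0,1) : ℂ) * Complex.I) =
        (((ContinuousLinearMap.id ℝ ℝ).smulRight Complex.I) ∘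
          ((fun w => fderiv ℝ u w (0,1)) ∘ (fun z : ℂ => ((z.re, z.im) : ℝ × ℝ)))) := by
      funext z
      simp [Complex.real_smul, Function.comp]
    rw [this]
    exact h
  have hg : HasFDerivAt (gfun u) _ z₀ := h2.sub h3
  have hlap' : D2 (0,1) (0,1) = -a := by
    have := hlap w₀
    rw [lap_eq hu] at this
    rw [ha]; linarith [this]
  have hsym : D2 (0,1) (1,0) = b := by rw [hb, hD2, hsymm hu]
  have key : HasFDerivAt (gfun u)
      ((c • (ContinuousLinearMap.id ℂ ℂ)).restrictScalars ℝ) z₀ := by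
    convert hg using 1
    ext1 z
    have hz : ((z.re, z.im) : ℝ × ℝ) = z.re • ((1:ℝ),(0:ℝ)) + z.im • ((0:ℝ),(1:ℝ)) := by
      simp [Prod.ext_iff]
    have e1 : ∀ v : ℝ × ℝ, D2 (z.re, z.im) v = z.re * D2 (1,0) v + z.im * D2 (0,1) v := by
      intro v
      rw [hz, D2.map_add, D2.map_smul, D2.map_smul]
      simp [smul_eq_mul]
    simp only [ContinuousLinearMap.coe_restrictScalars', ContinuousLinearMap.smul_apply,
      ContinuousLinearMap.coe_id', id_eq, ContinuousLinearMap.coe_sub',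
      Pi.sub_apply, ContinuousLinearMap.coe_comp', Function.comp_apply,
      ContinuousLinearMap.apply_apply, Complex.ofRealCLM_apply,
      ContinuousLinearMap.smulRight_apply, ContinuousLinearMap.coe_id',
      Complex.equivRealProdCLM_apply]
    show c • z = _
    rw [show (Complex.equivRealProdCLM.toContinuousLinearMap : ℂ → ℝ × ℝ) z = (z.re, z.im) from rfl]
    rw [e1, e1, hsym, hlap', ← ha, ← hb]
    rw [smul_eq_mul, hc]
    simp only [Complex.real_smul]
    apply Complex.ext <;> simp <;> ring
  have key2 : HasFDerivAt (𝕜 := ℂ) (gfun u) (c • ContinuousLinearMap.id ℂ ℂ) z₀ :=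
    .of_isLittleO key.isLittleO
  exact key2.differentiableAt

end ent

noncomputable def Pt (r θ : ℝ) : ℝ × ℝ := (r * Real.cos θ, r * Real.sin θ)

section ang
variable {u : ℝ × ℝ → ℝ} (hu : ContDiff ℝ 2 u) (hlap : ∀ z, lap u z = 0)
include hu hlap

lemma angular_zero {r : ℝ} (hr : 0 < r) :
    ∫ θ in (-π)..π, (Real.cos θ * fderiv ℝ u (Pt r θ) (1,0)
      + Real.sin θ * fderiv ℝ u (Pt r θ) (0,1)) = 0 := by
  have hg := gfun_entire hu hlap
  have hC : (∮ z in C(0, r), gfun u z) = 0 :=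
    Complex.circleIntegral_eq_zero_of_differentiable_on_off_countable hr.le Set.countable_empty
      hg.continuous.continuousOn (fun z _ => hg z)
  have hC' : (∫ θ in (0:ℝ)..2*π, circleMap 0 r θ * Complex.I * gfun u (circleMap 0 r θ)) = 0 := by
    simpa only [circleIntegral, deriv_circleMap, smul_eq_mul] using hC
  set h : ℝ → ℝ := fun θ => Real.cos θ * fderiv ℝ u (Pt r θ) (1,0)
      + Real.sin θ * fderiv ℝ u (Pt r θ) (0,1) with hh
  have hcont : Continuous (fun θ => circleMap 0 r θ * Complex.I * gfun u (circleMap 0 r θ)) :=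
    ((continuous_circleMap 0 r).mul continuous_const).mul
      (hg.continuous.comp (continuous_circleMap 0 r))
  have hpt : ∀ θ, (circleMap 0 r θ * Complex.I * gfun u (circleMap 0 r θ)).im = r * h θ := by
    intro θ
    have hre : (circleMap 0 r θ).re = r * Real.cos θ := by
      simp [circleMap, Complex.exp_mul_I, ← Complex.ofReal_cos, ← Complex.ofReal_sin]
    have him : (circleMap 0 r θ).im = r * Real.sin θ := by
      simp [circleMap, Complex.exp_mul_I, ← Complex.ofReal_cos, ← Complex.ofReal_sin]
    rw [hh]
    simp only [gfun, hre, him, Pt, Complex.mul_im, Complex.mul_re, Complex.I_re, Complex.I_im,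
      Complex.sub_re, Complex.sub_im, Complex.ofReal_re, Complex.ofReal_im]
    ring
  have him0 : (∫ θ in (0:ℝ)..2*π, (circleMap 0 r θ * Complex.I * gfun u (circleMap 0 r θ)).im)
      = 0 := by
    rw [intervalIntegral.integral_of_le (by positivity : (0:ℝ) ≤ 2*π)] at hC' ⊢
    have := (Complex.imCLM.integral_comp_comm (hcont.integrableOn_Ioc
      (a := 0) (b := 2*π) (μ := volume))).symm
    simp only [Complex.imCLM_apply] at this
    rw [← this, hC']
    simp
  have h02 : (∫ θ in (0:ℝ)..2*π, h θ) = 0 := by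
    have : (∫ θ in (0:ℝ)..2*π, r * h θ) = 0 := by
      rw [← him0]
      congr 1
      funext θ
      rw [hpt]
    rw [intervalIntegral.integral_const_mul] at this
    rcases mul_eq_zero.mp this with h' | h'
    · exact absurd h' hr.ne'
    · exact h'
  have hper : Function.Periodic h (2*π) := by
    intro θ
    simp [hh, Pt, Real.cos_add_two_pi, Real.sin_add_two_pi]
  calc ∫ θ in (-π)..π, h θ = ∫ θ in (-π)..(-π + 2*π), h θ := by congr 1; ring
    _ = ∫ θ in (0:ℝ)..(0 + 2*π), h θ := hper.intervalIntegral_add_eq (-π) 0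
    _ = 0 := by rw [zero_add]; exact h02

end ang

section mv

lemma contPt : Continuous (fun p : ℝ × ℝ => Pt p.1 p.2) := by
  unfold Pt; fun_prop

variable {u : ℝ × ℝ → ℝ} (hu : ContDiff ℝ 2 u) (hlap : ∀ z, lap u z = 0)
include hu

lemma uxcont (v : ℝ × ℝ) : Continuous (fun w => fderiv ℝ u w v) :=
  (ContinuousLinearMap.apply ℝ ℝ v).continuous.comp (hD1 hu).continuous

lemma hasDeriv_r (θ : ℝ) (r : ℝ) :
    HasDerivAt (fun r => u (Pt r θ))
      (Real.cos θ * fderiv ℝ u (Pt r θ) (1,0) + Real.sin θ * fderiv ℝ u (Pt r θ) (0,1)) r := by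
  have h1 : HasFDerivAt u (fderiv ℝ u (Pt r θ)) (Pt r θ) :=
    ((hu.differentiable (by norm_num)) (Pt r θ)).hasFDerivAt
  have h2 : HasDerivAt (fun r => Pt r θ) (Real.cos θ, Real.sin θ) r := by
    exact (hasDerivAt_mul_const (Real.cos θ)).prodMk (hasDerivAt_mul_const (Real.sin θ))
  have h3 := h1.comp_hasDerivAt r h2
  refine h3.congr_deriv ?_
  have : ((Real.cos θ, Real.sin θ) : ℝ × ℝ)
      = Real.cos θ • ((1:ℝ),(0:ℝ)) + Real.sin θ • ((0:ℝ),(1:ℝ)) := by simp [Prod.ext_iff]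
  rw [this, map_add, (fderiv ℝ u (Pt r θ)).map_smul, (fderiv ℝ u (Pt r θ)).map_smul]
  simp [smul_eq_mul]

include hlap

lemma hasDeriv_phi (r₀ : ℝ) :
    HasDerivAt (fun r => ∫ θ in (-π)..π, u (Pt r θ))
      (∫ θ in (-π)..π, (Real.cos θ * fderiv ℝ u (Pt r₀ θ) (1,0)
        + Real.sin θ * fderiv ℝ u (Pt r₀ θ) (0,1))) r₀ := by
  obtain ⟨C1, hC1⟩ := (isCompact_closedBall (0 : ℝ × ℝ) (|r₀|+1)).exists_bound_of_continuousOn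
    ((uxcont hu ((1:ℝ),(0:ℝ))).continuousOn)
  obtain ⟨C2, hC2⟩ := (isCompact_closedBall (0 : ℝ × ℝ) (|r₀|+1)).exists_bound_of_continuousOn
    ((uxcont hu ((0:ℝ),(1:ℝ))).continuousOn)
  have hmem : ∀ r ∈ Metric.ball r₀ 1, ∀ θ : ℝ,
      Pt r θ ∈ Metric.closedBall (0 : ℝ × ℝ) (|r₀|+1) := by
    intro r hr θ
    rw [Metric.mem_closedBall, dist_zero_right]
    have h1 : |r| ≤ |r₀| + 1 := by
      rw [Metric.mem_ball, Real.dist_eq] at hr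
      have := abs_sub_abs_le_abs_sub r r₀
      linarith
    rw [Prod.norm_def]
    simp only [Pt, Real.norm_eq_abs]
    apply max_le <;> · rw [abs_mul]
                       calc _ ≤ |r| * 1 := by
                              gcongr
                              first
                              | exact Real.abs_cos_le_one θ
                              | exact Real.abs_sin_le_one θ
                            _ ≤ |r₀| + 1 := by rw [mul_one]; exact h1
  have key := intervalIntegral.hasDerivAt_integral_of_dominated_loc_of_deriv_le
    (F := fun r θ => u (Pt r θ))
    (F' := fun r θ => Real.cos θ * fderiv ℝ u (Pt r θ) (1,0)
        + Real.sin θ * fderiv ℝ u (Pt r θ) (0,1))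
    (a := -π) (b := π) (x₀ := r₀) (bound := fun _ => C1 + C2) (s := Metric.ball r₀ 1) (μ := volume) (Metric.ball_mem_nhds r₀ one_pos)
    ?_ ?_ ?_ ?_ ?_ ?_
  · exact key.2
  · filter_upwards with r
    exact ((hu.continuous.comp (contPt.comp (Continuous.prodMk_right r))).aestronglyMeasurable)
  · exact ((hu.continuous.comp (contPt.comp (Continuous.prodMk_right r₀)))).intervalIntegrable _ _
  · apply Continuous.aestronglyMeasurable
    have h1 : Continuous (fun θ : ℝ => Pt r₀ θ) := contPt.comp (Continuous.prodMk_right r₀)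
    exact (Real.continuous_cos.mul ((uxcont hu ((1:ℝ),(0:ℝ))).comp h1)).add
      (Real.continuous_sin.mul ((uxcont hu ((0:ℝ),(1:ℝ))).comp h1))
  · filter_upwards with θ _ r hr
    have hm := hmem r hr θ
    calc ‖Real.cos θ * fderiv ℝ u (Pt r θ) (1,0) + Real.sin θ * fderiv ℝ u (Pt r θ) (0,1)‖
        ≤ ‖Real.cos θ * fderiv ℝ u (Pt r θ) (1,0)‖ + ‖Real.sin θ * fderiv ℝ u (Pt r θ) (0,1)‖ :=
          norm_add_le _ _
      _ ≤ C1 + C2 := by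
          apply add_le_add
          · rw [norm_mul]
            calc _ ≤ 1 * ‖fderiv ℝ u (Pt r θ) (1,0)‖ := by
                    gcongr; rw [Real.norm_eq_abs]; exact Real.abs_cos_le_one θ
              _ ≤ C1 := by rw [one_mul]; exact hC1 _ hm
          · rw [norm_mul]
            calc _ ≤ 1 * ‖fderiv ℝ u (Pt r θ) (0,1)‖ := by
                    gcongr; rw [Real.norm_eq_abs]; exact Real.abs_sin_le_one θ
              _ ≤ C2 := by rw [one_mul]; exact hC2 _ hm
  · exact intervalIntegrable_const
  · filter_upwards with θ _ r _
    exact hasDeriv_r hu θ r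

lemma phi_deriv_zero (r₀ : ℝ) (hr₀ : 0 ≤ r₀) :
    HasDerivAt (fun r => ∫ θ in (-π)..π, u (Pt r θ)) 0 r₀ := by
  rcases eq_or_lt_of_le hr₀ with h | h
  · have := hasDeriv_phi hu hlap r₀
    convert this using 1
    rw [← h]
    have hPt : ∀ θ : ℝ, Pt (0:ℝ) θ = (0, 0) := by intro θ; simp [Pt]
    symm
    calc (∫ θ in (-π)..π, (Real.cos θ * fderiv ℝ u (Pt 0 θ) (1,0)
          + Real.sin θ * fderiv ℝ u (Pt 0 θ) (0,1)))
        = ∫ θ in (-π)..π, (Real.cos θ * fderiv ℝ u ((0:ℝ),(0:ℝ)) (1,0)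
          + Real.sin θ * fderiv ℝ u ((0:ℝ),(0:ℝ)) (0,1)) := by
          congr 1
          funext θ
          rw [hPt]
      _ = (∫ θ in (-π)..π, Real.cos θ) * fderiv ℝ u ((0:ℝ),(0:ℝ)) (1,0)
          + (∫ θ in (-π)..π, Real.sin θ) * fderiv ℝ u ((0:ℝ),(0:ℝ)) (0,1) := by
          rw [intervalIntegral.integral_add, intervalIntegral.integral_mul_const,
            intervalIntegral.integral_mul_const]
          · exact (Real.continuous_cos.mul continuous_const).intervalIntegrable _ _
          · exact (Real.continuous_sin.mul continuous_const).intervalIntegrable _ _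
      _ = 0 := by
          rw [integral_cos, integral_sin]
          simp
  · have := hasDeriv_phi hu hlap r₀
    rwa [angular_zero hu hlap h] at this

lemma mean_value {R : ℝ} (hR : 0 ≤ R) :
    (∫ θ in (-π)..π, u (Pt R θ)) = 2 * π * u (0, 0) := by
  have hconst : (∫ θ in (-π)..π, u (Pt R θ)) = ∫ θ in (-π)..π, u (Pt 0 θ) := by
    rcases eq_or_lt_of_le hR with h | h
    · rw [← h]
    · have hcont : ContinuousOn (fun r => ∫ θ in (-π)..π, u (Pt r θ)) (Set.Icc 0 R) :=
        fun x _ => ((hasDeriv_phi hu hlap x).continuousAt).continuousWithinAt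
      have hderiv : ∀ x ∈ Set.Ico 0 R,
          HasDerivWithinAt (fun r => ∫ θ in (-π)..π, u (Pt r θ)) 0 (Set.Ici x) x :=
        fun x hx => (phi_deriv_zero hu hlap x hx.1).hasDerivWithinAt
      exact constant_of_has_deriv_right_zero hcont hderiv R (Set.right_mem_Icc.mpr hR)
  rw [hconst]
  have hPt : ∀ θ : ℝ, Pt (0:ℝ) θ = ((0:ℝ), (0:ℝ)) := by intro θ; simp [Pt]
  simp only [hPt]
  rw [intervalIntegral.integral_const, smul_eq_mul]
  ring

end mv

section low
variable {u : ℝ × ℝ → ℝ} (hu : ContDiff ℝ 2 u) (hlap : ∀ z, lap u z = 0)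
include hu hlap

lemma circle_lower {R : ℝ} (hR : 0 ≤ R) :
    2 * π * Real.exp (2 * u (0, 0)) ≤ ∫ θ in (-π)..π, Real.exp (2 * u (Pt R θ)) := by
  set c := Real.exp (2 * u (0,0)) with hc
  have hcpos : 0 < c := Real.exp_pos _
  have hPtc : Continuous (fun θ : ℝ => u (Pt R θ)) :=
    hu.continuous.comp (contPt.comp (Continuous.prodMk_right R))
  have hpoint : ∀ θ : ℝ, c * (2 * u (Pt R θ) + (1 - 2 * u (0,0)))
      ≤ Real.exp (2 * u (Pt R θ)) := by
    intro θ
    have h1 := Real.add_one_le_exp (2 * u (Pt R θ) - 2 * u (0,0))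
    have h2 : c * ((2 * u (Pt R θ) - 2 * u (0,0)) + 1) ≤ c * Real.exp (2 * u (Pt R θ) - 2 * u (0,0)) := by
      exact mul_le_mul_of_nonneg_left h1 hcpos.le
    calc c * (2 * u (Pt R θ) + (1 - 2 * u (0,0)))
        = c * ((2 * u (Pt R θ) - 2 * u (0,0)) + 1) := by ring
      _ ≤ c * Real.exp (2 * u (Pt R θ) - 2 * u (0,0)) := h2
      _ = Real.exp (2 * u (Pt R θ)) := by
          rw [hc, ← Real.exp_add]; ring_nf
  have hmono : (∫ θ in (-π)..π, c * (2 * u (Pt R θ) + (1 - 2 * u (0,0))))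
      ≤ ∫ θ in (-π)..π, Real.exp (2 * u (Pt R θ)) := by
    apply intervalIntegral.integral_mono_on (by linarith [Real.pi_pos])
    · exact (continuous_const.mul ((continuous_const.mul hPtc).add continuous_const)).intervalIntegrable _ _
    · exact (Real.continuous_exp.comp (continuous_const.mul hPtc)).intervalIntegrable _ _
    · intro θ _; exact hpoint θ
  have hcomp : (∫ θ in (-π)..π, c * (2 * u (Pt R θ) + (1 - 2 * u (0,0)))) = 2 * π * c := by
    rw [intervalIntegral.integral_const_mul]
    rw [intervalIntegral.integral_add (f := fun θ => 2 * u (Pt R θ)) ((continuous_const.mul hPtc).intervalIntegrable _ _)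
      (intervalIntegrable_const)]
    rw [intervalIntegral.integral_const_mul, mean_value hu hlap hR,
      intervalIntegral.integral_const, smul_eq_mul]
    ring
  rw [← hcomp]
  exact hmono

end low

/-- There is no harmonic function `u` on all of `ℝ²` with
`∫_{ℝ²} e^{2u} dz ≤ 4π`. -/
theorem stmt_0 :
    ¬ ∃ u : ℝ × ℝ → ℝ, ContDiff ℝ 2 u ∧ (∀ z, lap u z = 0) ∧
      (∫⁻ z, ENNReal.ofReal (Real.exp (2 * u z)) ≤ ENNReal.ofReal (4 * π)) := by
  rintro ⟨u, hu, hlap, hint⟩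
  set c := Real.exp (2 * u (0,0)) with hc
  have hcpos : 0 < c := Real.exp_pos _
  set R : ℝ := 3 * Real.exp (-u (0,0)) with hR
  have hRpos : 0 < R := by positivity
  set S : Set (ℝ × ℝ) := Set.Ioo 0 R ×ˢ Set.Ioo (-π) π with hS
  have hSmeas : MeasurableSet S := measurableSet_Ioo.prod measurableSet_Ioo
  set g : ℝ × ℝ → ENNReal := fun z => ENNReal.ofReal (Real.exp (2 * u z)) with hg
  have htarget : polarCoord.target = Set.Ioi (0:ℝ) ×ˢ Set.Ioo (-π) π := rfl
  have hSsub : S ⊆ polarCoord.target := by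
    rw [htarget, hS]
    exact Set.prod_mono (Set.Ioo_subset_Ioi_self) le_rfl
  have hinj : Set.InjOn polarCoord.symm S := by
    apply (polarCoord.symm.injOn).mono
    rwa [OpenPartialHomeomorph.symm_source]
  set B : ℝ × ℝ → ℝ × ℝ →L[ℝ] ℝ × ℝ := fun p =>
    LinearMap.toContinuousLinearMap (Matrix.toLin (Module.Basis.finTwoProd ℝ) (Module.Basis.finTwoProd ℝ)
      !![Real.cos p.2, -p.1 * Real.sin p.2; Real.sin p.2, p.1 * Real.cos p.2]) with hB
  have hfd : ∀ p ∈ S, HasFDerivWithinAt polarCoord.symm (B p) S p := fun p _ =>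
    (hasFDerivAt_polarCoord_symm p).hasFDerivWithinAt
  have hBdet : ∀ p : ℝ × ℝ, (B p).det = p.1 := by
    intro p
    conv_rhs => rw [← one_mul p.1, ← Real.cos_sq_add_sin_sq p.2]
    simp only [hB, neg_mul, LinearMap.det_toContinuousLinearMap, LinearMap.det_toLin,
      Matrix.det_fin_two_of, sub_neg_eq_add]
    ring
  have hsymmPt : ∀ p : ℝ × ℝ, polarCoord.symm p = Pt p.1 p.2 := fun p => rfl
  -- measurability of the polar integrand
  have hm2 : Measurable fun p : ℝ × ℝ => ENNReal.ofReal (Real.exp (2 * u (Pt p.1 p.2))) := by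
    apply Measurable.ennreal_ofReal
    exact (Real.continuous_exp.comp ((continuous_const.mul (hu.continuous.comp contPt)))).measurable
  have hm1 : Measurable fun p : ℝ × ℝ => ENNReal.ofReal p.1 :=
    measurable_fst.ennreal_ofReal
  have hmF : Measurable fun p : ℝ × ℝ =>
      ENNReal.ofReal p.1 * ENNReal.ofReal (Real.exp (2 * u (Pt p.1 p.2))) := hm1.mul hm2
  -- change of variables
  have step2 : ∫⁻ z in polarCoord.symm '' S, g z
      = ∫⁻ p in S, ENNReal.ofReal |(B p).det| * g (polarCoord.symm p) :=
    lintegral_image_eq_lintegral_abs_det_fderiv_mul volume hSmeas hfd hinj g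
  have step3 : (∫⁻ p in S, ENNReal.ofReal |(B p).det| * g (polarCoord.symm p))
      = ∫⁻ p in S, ENNReal.ofReal p.1 * ENNReal.ofReal (Real.exp (2 * u (Pt p.1 p.2))) := by
    apply setLIntegral_congr_fun hSmeas
    intro p hp
    dsimp only
    rw [hBdet p, abs_of_pos hp.1.1, hsymmPt p, hg]
  -- Fubini
  have step4 : (∫⁻ p in S, ENNReal.ofReal p.1 * ENNReal.ofReal (Real.exp (2 * u (Pt p.1 p.2))))
      = ∫⁻ r in Set.Ioo 0 R, ∫⁻ θ in Set.Ioo (-π) π,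
          ENNReal.ofReal r * ENNReal.ofReal (Real.exp (2 * u (Pt r θ))) := by
    rw [hS, MeasureTheory.Measure.volume_eq_prod, ← Measure.prod_restrict]
    exact lintegral_prod _ hmF.aemeasurable
  -- inner lower bound
  have step5 : ∀ r ∈ Set.Ioo (0:ℝ) R,
      ENNReal.ofReal (2 * π * c * r) ≤ ∫⁻ θ in Set.Ioo (-π) π,
        ENNReal.ofReal r * ENNReal.ofReal (Real.exp (2 * u (Pt r θ))) := by
    intro r hr
    have hcont : Continuous fun θ : ℝ => Real.exp (2 * u (Pt r θ)) :=
      Real.continuous_exp.comp (continuous_const.mul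
        (hu.continuous.comp (contPt.comp (Continuous.prodMk_right r))))
    have hInt : IntegrableOn (fun θ : ℝ => Real.exp (2 * u (Pt r θ))) (Set.Ioo (-π) π) :=
      (hcont.integrableOn_Icc).mono_set Set.Ioo_subset_Icc_self
    have heq : (∫⁻ θ in Set.Ioo (-π) π, ENNReal.ofReal (Real.exp (2 * u (Pt r θ))))
        = ENNReal.ofReal (∫ θ in Set.Ioo (-π) π, Real.exp (2 * u (Pt r θ))) :=
      (ofReal_integral_eq_lintegral_ofReal hInt
        (Filter.Eventually.of_forall fun θ => (Real.exp_pos _).le)).symm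
    have hval : (∫ θ in Set.Ioo (-π) π, Real.exp (2 * u (Pt r θ)))
        = ∫ θ in (-π)..π, Real.exp (2 * u (Pt r θ)) := by
      rw [intervalIntegral.integral_of_le (by linarith [Real.pi_pos] : -π ≤ π),
        MeasureTheory.integral_Ioc_eq_integral_Ioo]
    calc ENNReal.ofReal (2 * π * c * r)
        = ENNReal.ofReal r * ENNReal.ofReal (2 * π * c) := by
          rw [← ENNReal.ofReal_mul hr.1.le]; ring_nf
      _ ≤ ENNReal.ofReal r * ENNReal.ofReal (∫ θ in Set.Ioo (-π) π, Real.exp (2 * u (Pt r θ))) := by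
          gcongr
          rw [hval]
          have := circle_lower hu hlap hr.1.le
          linarith [this]
      _ = ENNReal.ofReal r * ∫⁻ θ in Set.Ioo (-π) π, ENNReal.ofReal (Real.exp (2 * u (Pt r θ))) := by
          rw [heq]
      _ = ∫⁻ θ in Set.Ioo (-π) π,
            ENNReal.ofReal r * ENNReal.ofReal (Real.exp (2 * u (Pt r θ))) := by
          rw [lintegral_const_mul _ (by
            apply Measurable.ennreal_ofReal
            exact hcont.measurable)]
  -- outer lower bound
  have hmInner : Measurable fun r : ℝ => ∫⁻ θ in Set.Ioo (-π) π,
      ENNReal.ofReal r * ENNReal.ofReal (Real.exp (2 * u (Pt r θ))) :=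
    Measurable.lintegral_prod_right hmF
  have step6 : ∫⁻ r in Set.Ioo 0 R, ENNReal.ofReal (2 * π * c * r)
      ≤ ∫⁻ r in Set.Ioo 0 R, ∫⁻ θ in Set.Ioo (-π) π,
          ENNReal.ofReal r * ENNReal.ofReal (Real.exp (2 * u (Pt r θ))) :=
    setLIntegral_mono hmInner step5
  have step7 : (∫⁻ r in Set.Ioo 0 R, ENNReal.ofReal (2 * π * c * r))
      = ENNReal.ofReal (π * (c * R ^ 2)) := by
    have hInt : IntegrableOn (fun r : ℝ => 2 * π * c * r) (Set.Ioo 0 R) :=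
      ((continuous_const.mul continuous_id).integrableOn_Icc).mono_set Set.Ioo_subset_Icc_self
    rw [← ofReal_integral_eq_lintegral_ofReal hInt (by
      filter_upwards [MeasureTheory.ae_restrict_mem measurableSet_Ioo] with r hr
      have hr0 : 0 < r := hr.1
      positivity)]
    congr 1
    rw [← MeasureTheory.integral_Ioc_eq_integral_Ioo,
      ← intervalIntegral.integral_of_le hRpos.le, intervalIntegral.integral_const_mul,
      integral_id]
    ring
  -- assemble
  have hfinal : ENNReal.ofReal (π * (c * R ^ 2)) ≤ ENNReal.ofReal (4 * π) := by
    calc ENNReal.ofReal (π * (c * R ^ 2)) = ∫⁻ r in Set.Ioo 0 R, ENNReal.ofReal (2 * π * c * r) :=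
          step7.symm
      _ ≤ _ := step6
      _ = ∫⁻ p in S, ENNReal.ofReal p.1 * ENNReal.ofReal (Real.exp (2 * u (Pt p.1 p.2))) :=
          step4.symm
      _ = ∫⁻ z in polarCoord.symm '' S, g z := by rw [step2, step3]
      _ ≤ ∫⁻ z, g z := setLIntegral_le_lintegral _ _
      _ ≤ ENNReal.ofReal (4 * π) := hint
  have h9 : c * R ^ 2 = 9 := by
    have key : Real.exp (2 * u (0,0)) * (Real.exp (-u (0,0)) * Real.exp (-u (0,0))) = 1 := by
      rw [← Real.exp_add, ← Real.exp_add,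
        show 2 * u (0,0) + (-u (0,0) + -u (0,0)) = 0 by ring, Real.exp_zero]
    calc c * R ^ 2
        = 9 * (Real.exp (2 * u (0,0)) * (Real.exp (-u (0,0)) * Real.exp (-u (0,0)))) := by
          rw [hc, hR]; ring
      _ = 9 := by rw [key]; ring
  rw [h9, ENNReal.ofReal_le_ofReal_iff (by positivity)] at hfinal
  nlinarith [Real.pi_pos]
end

section
/- If u is a smooth function on ℝ² satisfying −Δu = K₀ e^{2u} on ℝ² with a constant K₀ < 0, then ∫_{ℝ²} e^{2u} dz = +∞. -/
open Real MeasureTheory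

open Filter Topology


lemma second_deriv_test {g g' : ℝ → ℝ} {c : ℝ}
    (hg : ∀ᶠ t in 𝓝 (0:ℝ), HasDerivAt g (g' t) t)
    (hg' : HasDerivAt g' c 0)
    (hmax : IsLocalMax g 0) : c ≤ 0 := by
  by_contra hc
  push_neg at hc
  have h0 : g' 0 = 0 := hmax.hasDerivAt_eq_zero hg.self_of_nhds
  have hslope : Tendsto (slope g' 0) (𝓝[≠] 0) (𝓝 c) :=
    (hasDerivAt_iff_tendsto_slope).1 hg'
  have hev : ∀ᶠ t in 𝓝[≠] (0:ℝ), 0 < slope g' 0 t :=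
    hslope.eventually (eventually_gt_nhds hc)
  have hev' : ∀ᶠ t in 𝓝[>] (0:ℝ), 0 < g' t := by
    filter_upwards [nhdsWithin_mono 0 (by intro x hx; exact ne_of_gt hx) hev,
      self_mem_nhdsWithin] with t ht ht'
    have heq : slope g' 0 t = g' t / t := by simp [slope, h0, div_eq_inv_mul]
    rw [heq] at ht
    rcases div_pos_iff.1 ht with h | h
    · exact h.1
    · exact absurd ht' (by simp only [Set.mem_Ioi]; push_neg; linarith [h.2])
  -- get an interval
  rw [eventually_nhdsWithin_iff, Metric.eventually_nhds_iff] at hev'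
  obtain ⟨ε1, hε1, h1⟩ := hev'
  rw [Metric.eventually_nhds_iff] at hg
  obtain ⟨ε2, hε2, h2⟩ := hg
  obtain ⟨ε3, hε3, h3⟩ := Metric.eventually_nhds_iff.1 (hmax : ∀ᶠ t in 𝓝 0, g t ≤ g 0)
  set ε := min ε1 (min ε2 ε3) with hε
  have hεpos : 0 < ε := lt_min hε1 (lt_min hε2 hε3)
  have hmono : StrictMonoOn g (Set.Icc 0 (ε/2)) := by
    apply strictMonoOn_of_deriv_pos (convex_Icc _ _)
    · intro t ht
      have : dist t 0 < ε2 := by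
        simp only [Real.dist_eq, sub_zero]
        rw [abs_of_nonneg ht.1]
        calc t ≤ ε/2 := ht.2
        _ < ε := by linarith
        _ ≤ ε2 := le_trans (min_le_right _ _) (min_le_left _ _)
      exact ((h2 this).differentiableAt).continuousAt.continuousWithinAt
    · intro t ht
      rw [interior_Icc] at ht
      have hd : dist t 0 < ε ∧ 0 < t := by
        constructor
        · simp only [Real.dist_eq, sub_zero]; rw [abs_of_pos ht.1]; linarith [ht.2]
        · exact ht.1
      have hda : HasDerivAt g (g' t) t := h2 (lt_of_lt_of_le hd.1 (le_trans (min_le_right _ _) (min_le_left _ _)))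
      rw [hda.deriv]
      exact h1 (lt_of_lt_of_le hd.1 (min_le_left _ _)) hd.2
  have hlt : g 0 < g (ε/2) := hmono (by constructor <;> [rfl; positivity]) (by constructor <;> [positivity; rfl]) (by positivity)
  have : g (ε/2) ≤ g 0 := h3 (by simp only [Real.dist_eq, sub_zero]; rw [abs_of_pos (by positivity)]; calc ε/2 < ε := by linarith
                                                                                                          _ ≤ ε3 := le_trans (min_le_right _ _) (min_le_right _ _))
  linarith



lemma dir2_nonpos {w : ℝ × ℝ → ℝ} {z₀ e : ℝ × ℝ}
    (hw : ∀ᶠ z in 𝓝 z₀, DifferentiableAt ℝ w z)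
    (hF : DifferentiableAt ℝ (fun z => fderiv ℝ w z e) z₀)
    (hmax : IsLocalMax w z₀) :
    fderiv ℝ (fun z => fderiv ℝ w z e) z₀ e ≤ 0 := by
  set ℓ : ℝ → ℝ × ℝ := fun t => z₀ + t • e with hℓdef
  have hℓ0 : ℓ 0 = z₀ := by simp [hℓdef]
  have hℓ : ∀ t, HasDerivAt ℓ e t := by
    intro t
    have := ((hasDerivAt_id t).smul_const e).const_add z₀
    simpa [hℓdef] using this
  have hcont : Tendsto ℓ (𝓝 0) (𝓝 z₀) := by
    rw [← hℓ0]; exact (hℓ 0).continuousAt.tendsto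
  have hg : ∀ᶠ t in 𝓝 (0:ℝ), HasDerivAt (fun t => w (ℓ t)) (fderiv ℝ w (ℓ t) e) t := by
    filter_upwards [hcont.eventually hw] with t ht
    exact ht.hasFDerivAt.comp_hasDerivAt t (hℓ t)
  have hg' : HasDerivAt (fun t => fderiv ℝ w (ℓ t) e)
      (fderiv ℝ (fun z => fderiv ℝ w z e) z₀ e) 0 := by
    have hF' : DifferentiableAt ℝ (fun z => fderiv ℝ w z e) (ℓ 0) := hℓ0 ▸ hF
    have := hF'.hasFDerivAt.comp_hasDerivAt 0 (hℓ 0)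
    rwa [hℓ0] at this
  have hmaxg : IsLocalMax (fun t => w (ℓ t)) 0 := by
    have : ∀ᶠ t in 𝓝 (0:ℝ), w (ℓ t) ≤ w z₀ := hcont.eventually hmax
    simpa [IsLocalMax, IsMaxFilter, hℓ0] using this
  exact second_deriv_test hg hg' hmaxg


noncomputable abbrev pfst : (ℝ × ℝ) →L[ℝ] ℝ := ContinuousLinearMap.fst ℝ ℝ ℝ
noncomputable abbrev psnd : (ℝ × ℝ) →L[ℝ] ℝ := ContinuousLinearMap.snd ℝ ℝ ℝ

lemma sq_fst_hasFDerivAt (z : ℝ × ℝ) :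
    HasFDerivAt (fun z : ℝ × ℝ => z.1^2) ((2*z.1) • pfst) z := by
  have := (hasDerivAt_pow 2 z.1).comp_hasFDerivAt z (hasFDerivAt_fst (p := z) (𝕜 := ℝ))
  refine this.congr_fderiv ?_
  refine ContinuousLinearMap.ext fun w => ?_
  simp

lemma sq_snd_hasFDerivAt (z : ℝ × ℝ) :
    HasFDerivAt (fun z : ℝ × ℝ => z.2^2) ((2*z.2) • psnd) z := by
  have := (hasDerivAt_pow 2 z.2).comp_hasFDerivAt z (hasFDerivAt_snd (p := z) (𝕜 := ℝ))
  refine this.congr_fderiv ?_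
  refine ContinuousLinearMap.ext fun w => ?_
  simp

lemma s_hasFDerivAt (R : ℝ) (z : ℝ × ℝ) :
    HasFDerivAt (fun z : ℝ × ℝ => R^2 - z.1^2 - z.2^2)
      ((-(2*z.1)) • pfst + (-(2*z.2)) • psnd) z := by
  have := ((sq_fst_hasFDerivAt z).const_sub (R^2)).sub (sq_snd_hasFDerivAt z)
  refine this.congr_fderiv ?_
  refine ContinuousLinearMap.ext fun w => ?_
  simp; ring

lemma v_hasFDerivAt (R c : ℝ) (z : ℝ × ℝ) (hs : 0 < R^2 - z.1^2 - z.2^2) :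
    HasFDerivAt (fun z : ℝ × ℝ => c - Real.log (R^2 - z.1^2 - z.2^2))
      ((((R^2 - z.1^2 - z.2^2))⁻¹ * (2*z.1)) • pfst +
       (((R^2 - z.1^2 - z.2^2))⁻¹ * (2*z.2)) • psnd) z := by
  have hlog := (Real.hasDerivAt_log hs.ne').comp_hasFDerivAt z (s_hasFDerivAt R z)
  have := hlog.const_sub c
  refine this.congr_fderiv ?_
  refine ContinuousLinearMap.ext fun w => ?_
  simp
  ring

lemma Q1_hasFDerivAt (R : ℝ) (z : ℝ × ℝ) (hs : R^2 - z.1^2 - z.2^2 ≠ 0) :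
    HasFDerivAt (fun z : ℝ × ℝ => ((R^2 - z.1^2 - z.2^2))⁻¹ * (2*z.1))
      ((((R^2 - z.1^2 - z.2^2))⁻¹ * 2 +
        (2*z.1) * (((R^2 - z.1^2 - z.2^2)^2)⁻¹ * (2*z.1))) • pfst +
       ((2*z.1) * (((R^2 - z.1^2 - z.2^2)^2)⁻¹ * (2*z.2))) • psnd) z := by
  have hinv := (hasDerivAt_inv hs).comp_hasFDerivAt z (s_hasFDerivAt R z)
  have h2fst : HasFDerivAt (fun z : ℝ × ℝ => 2*z.1) ((2:ℝ) • pfst) z := by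
    have := (hasFDerivAt_fst (p := z) (𝕜 := ℝ)).const_mul (2:ℝ)
    convert this using 1
  have := hinv.mul h2fst
  refine this.congr_fderiv ?_
  refine ContinuousLinearMap.ext fun w => ?_
  simp
  ring

lemma Q2_hasFDerivAt (R : ℝ) (z : ℝ × ℝ) (hs : R^2 - z.1^2 - z.2^2 ≠ 0) :
    HasFDerivAt (fun z : ℝ × ℝ => ((R^2 - z.1^2 - z.2^2))⁻¹ * (2*z.2))
      (((2*z.2) * (((R^2 - z.1^2 - z.2^2)^2)⁻¹ * (2*z.1))) • pfst +
       ((((R^2 - z.1^2 - z.2^2))⁻¹ * 2 +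
        (2*z.2) * (((R^2 - z.1^2 - z.2^2)^2)⁻¹ * (2*z.2)))) • psnd) z := by
  have hinv := (hasDerivAt_inv hs).comp_hasFDerivAt z (s_hasFDerivAt R z)
  have h2snd : HasFDerivAt (fun z : ℝ × ℝ => 2*z.2) ((2:ℝ) • psnd) z := by
    have := (hasFDerivAt_snd (p := z) (𝕜 := ℝ)).const_mul (2:ℝ)
    convert this using 1
  have := hinv.mul h2snd
  refine this.congr_fderiv ?_
  refine ContinuousLinearMap.ext fun w => ?_
  simp
  ring

lemma liouville_no_solution (u : ℝ × ℝ → ℝ) (δ : ℝ) (hδ : 0 < δ)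
    (hsm : ContDiff ℝ (⊤ : ℕ∞) u)
    (heq : ∀ z, lap u z = δ * Real.exp (2 * u z)) : False := by
  have hsd : (0:ℝ) < Real.sqrt δ := Real.sqrt_pos.2 hδ
  set a : ℝ := Real.exp (u 0) with ha
  have hapos : 0 < a := Real.exp_pos _
  set R : ℝ := 4 / (Real.sqrt δ * a) with hRdef
  have hR : 0 < R := by positivity
  set c : ℝ := Real.log (2 * R / Real.sqrt δ) with hcdef
  set s : ℝ × ℝ → ℝ := fun z => R^2 - z.1^2 - z.2^2 with hsdef
  set v : ℝ × ℝ → ℝ := fun z => c - Real.log (s z) with hvdef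
  set w : ℝ × ℝ → ℝ := fun z => u z - v z with hwdef
  set U : Set (ℝ × ℝ) := {z | 0 < s z} with hUdef
  have hscont : Continuous s := by fun_prop
  have hU : IsOpen U := isOpen_lt continuous_const hscont
  have hs0 : s 0 = R^2 := by simp [hsdef]
  have h0U : (0 : ℝ × ℝ) ∈ U := by
    simp only [hUdef, Set.mem_setOf_eq, hs0]; positivity
  -- value of v at 0 and positivity of w 0
  have hv0 : v 0 = Real.log a - Real.log 2 := by
    have h1 : (2 * R / Real.sqrt δ) / R^2 = a / 2 := by
      rw [hRdef]; field_simp; ring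
    have h2 : v 0 = Real.log ((2 * R / Real.sqrt δ) / R^2) := by
      rw [hvdef]; simp only [hs0]
      rw [Real.log_div (by positivity) (by positivity)]
    rw [h2, h1, Real.log_div (ne_of_gt hapos) (by norm_num)]
  have hw0 : 0 < w 0 := by
    have : u 0 = Real.log a := by rw [ha, Real.log_exp]
    have hl2 : 0 < Real.log 2 := Real.log_pos (by norm_num)
    simp only [hwdef, hv0, this]; linarith
  -- bound for u on the closed disk
  set K' : Set (ℝ × ℝ) := {z | z.1^2 + z.2^2 ≤ R^2} with hK'def
  have habs : ∀ z : ℝ × ℝ, z ∈ K' → ‖z‖ ≤ R := by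
    intro z hz
    simp only [hK'def, Set.mem_setOf_eq] at hz
    have h1 : |z.1| ≤ R := by
      have : z.1^2 ≤ R^2 := by nlinarith [sq_nonneg z.2, hz]
      calc |z.1| = Real.sqrt (z.1^2) := (Real.sqrt_sq_eq_abs _).symm
        _ ≤ Real.sqrt (R^2) := Real.sqrt_le_sqrt this
        _ = R := Real.sqrt_sq hR.le
    have h2 : |z.2| ≤ R := by
      have : z.2^2 ≤ R^2 := by nlinarith [sq_nonneg z.1, hz]
      calc |z.2| = Real.sqrt (z.2^2) := (Real.sqrt_sq_eq_abs _).symm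
        _ ≤ Real.sqrt (R^2) := Real.sqrt_le_sqrt this
        _ = R := Real.sqrt_sq hR.le
    calc ‖z‖ = max ‖z.1‖ ‖z.2‖ := rfl
      _ ≤ R := max_le h1 h2
  have hK'c : IsCompact K' := by
    refine (isCompact_closedBall (0 : ℝ × ℝ) R).of_isClosed_subset
      (isClosed_le (by fun_prop) continuous_const) ?_
    intro z hz
    rw [Metric.mem_closedBall, dist_zero_right]
    exact habs z hz
  obtain ⟨zB, hzB, hzBmax⟩ := hK'c.exists_isMaxOn ⟨0, by simp [hK'def]; positivity⟩
    (hsm.continuous.continuousOn)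
  set B : ℝ := u zB with hBdef
  have hB : ∀ z ∈ K', u z ≤ B := fun z hz => hzBmax hz
  -- the threshold
  set T : ℝ := Real.exp (w 0 - 1 - B + c) with hTdef
  have hT : 0 < T := Real.exp_pos _
  have hUK' : ∀ z ∈ U, z ∈ K' := by
    intro z hz
    simp only [hUdef, Set.mem_setOf_eq, hsdef] at hz
    simp only [hK'def, Set.mem_setOf_eq]; linarith
  have key : ∀ z ∈ U, s z ≤ T → w z ≤ w 0 - 1 := by
    intro z hz hle
    have hszpos : 0 < s z := hz
    have h1 : u z ≤ B := hB z (hUK' z hz)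
    have h2 : Real.log (s z) ≤ Real.log T :=
      (Real.log_le_log_iff hszpos hT).2 hle
    have h3 : Real.log T = w 0 - 1 - B + c := by rw [hTdef, Real.log_exp]
    have hwz : w z = u z - (c - Real.log (s z)) := rfl
    linarith
  have hTR : T < R^2 := by
    by_contra h
    push_neg at h
    have := key 0 h0U (by rw [hs0]; exact h)
    linarith
  -- compact set where the max is attained
  set K : Set (ℝ × ℝ) := {z | T ≤ s z} with hKdef
  have hKU : K ⊆ U := fun z hz => lt_of_lt_of_le hT hz
  have hKc : IsCompact K := by
    refine hK'c.of_isClosed_subset (isClosed_le continuous_const hscont) ?_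
    exact fun z hz => hUK' z (hKU hz)
  have h0K : (0 : ℝ × ℝ) ∈ K := by
    simp only [hKdef, Set.mem_setOf_eq, hs0]; exact hTR.le
  -- v and w are differentiable on U
  have hvd : ∀ z ∈ U, DifferentiableAt ℝ v z := by
    intro z hz
    exact (v_hasFDerivAt R c z hz).differentiableAt
  have hud : Differentiable ℝ u := hsm.differentiable (by simp)
  have hwcont : ContinuousOn w K := by
    intro z hz
    exact ((hud z).sub (hvd z (hKU hz))).continuousAt.continuousWithinAt
  obtain ⟨z₀, hz₀K, hz₀max⟩ := hKc.exists_isMaxOn ⟨0, h0K⟩ hwcont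
  have hz₀U : z₀ ∈ U := hKU hz₀K
  have hglobal : ∀ z ∈ U, w z ≤ w z₀ := by
    intro z hz
    by_cases hcase : T ≤ s z
    · exact hz₀max hcase
    · push_neg at hcase
      have h1 := key z hz hcase.le
      have h2 : w 0 ≤ w z₀ := hz₀max h0K
      linarith
  have hlocmax : IsLocalMax w z₀ := by
    filter_upwards [hU.mem_nhds hz₀U] with z hz using hglobal z hz
  have hwev : ∀ᶠ z in 𝓝 z₀, DifferentiableAt ℝ w z := by
    filter_upwards [hU.mem_nhds hz₀U] with z hz using (hud z).sub (hvd z hz)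
  set sz := s z₀ with hszdef
  have hszpos : 0 < sz := hz₀U
  have hszne : sz ≠ 0 := ne_of_gt hszpos
  have hsne : R^2 - z₀.1^2 - z₀.2^2 ≠ 0 := hszne
  -- smoothness of the first derivatives of u
  have hu1 : ContDiff ℝ (⊤ : ℕ∞) (fun z => fderiv ℝ u z (1, 0)) :=
    (hsm.fderiv_right (by simp)).clm_apply contDiff_const
  have hu2 : ContDiff ℝ (⊤ : ℕ∞) (fun z => fderiv ℝ u z (0, 1)) :=
    (hsm.fderiv_right (by simp)).clm_apply contDiff_const
  -- fderiv of w on U, applied to basis vectors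
  have hfw : ∀ e : ℝ × ℝ, ∀ z ∈ U,
      fderiv ℝ w z e = fderiv ℝ u z e - fderiv ℝ v z e := by
    intro e z hz
    rw [hwdef, fderiv_fun_sub (hud z) (hvd z hz)]
    simp
  have hfv1 : ∀ z ∈ U, fderiv ℝ v z (1, 0) = (s z)⁻¹ * (2 * z.1) := by
    intro z hz
    rw [(v_hasFDerivAt R c z hz).fderiv]
    simp [pfst, psnd]
    exact Or.inl rfl
  have hfv2 : ∀ z ∈ U, fderiv ℝ v z (0, 1) = (s z)⁻¹ * (2 * z.2) := by
    intro z hz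
    rw [(v_hasFDerivAt R c z hz).fderiv]
    simp [pfst, psnd]
    exact Or.inl rfl
  -- the two eventual equalities
  have hFG1 : (fun z => fderiv ℝ w z (1, 0)) =ᶠ[𝓝 z₀]
      (fun z => fderiv ℝ u z (1, 0) - (R^2 - z.1^2 - z.2^2)⁻¹ * (2 * z.1)) := by
    filter_upwards [hU.mem_nhds hz₀U] with z hz
    rw [hfw (1,0) z hz, hfv1 z hz]
  have hFG2 : (fun z => fderiv ℝ w z (0, 1)) =ᶠ[𝓝 z₀]
      (fun z => fderiv ℝ u z (0, 1) - (R^2 - z.1^2 - z.2^2)⁻¹ * (2 * z.2)) := by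
    filter_upwards [hU.mem_nhds hz₀U] with z hz
    rw [hfw (0,1) z hz, hfv2 z hz]
  have hq1d := (Q1_hasFDerivAt R z₀ hsne).differentiableAt
  have hq2d := (Q2_hasFDerivAt R z₀ hsne).differentiableAt
  have hu1d : DifferentiableAt ℝ (fun z => fderiv ℝ u z (1, 0)) z₀ :=
    (hu1.differentiable (by simp)) z₀
  have hu2d : DifferentiableAt ℝ (fun z => fderiv ℝ u z (0, 1)) z₀ :=
    (hu2.differentiable (by simp)) z₀
  have hG1d : DifferentiableAt ℝ
      (fun z => fderiv ℝ u z (1, 0) - (R^2 - z.1^2 - z.2^2)⁻¹ * (2 * z.1)) z₀ :=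
    hu1d.sub hq1d
  have hG2d : DifferentiableAt ℝ
      (fun z => fderiv ℝ u z (0, 1) - (R^2 - z.1^2 - z.2^2)⁻¹ * (2 * z.2)) z₀ :=
    hu2d.sub hq2d
  have hF1d : DifferentiableAt ℝ (fun z => fderiv ℝ w z (1, 0)) z₀ :=
    hFG1.differentiableAt_iff.2 hG1d
  have hF2d : DifferentiableAt ℝ (fun z => fderiv ℝ w z (0, 1)) z₀ :=
    hFG2.differentiableAt_iff.2 hG2d
  have h1 := dir2_nonpos hwev hF1d hlocmax
  have h2 := dir2_nonpos hwev hF2d hlocmax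
  -- compute the second derivatives
  have hc1 : fderiv ℝ (fun z => fderiv ℝ w z (1, 0)) z₀ (1, 0) =
      fderiv ℝ (fun z => fderiv ℝ u z (1, 0)) z₀ (1, 0) -
        (sz⁻¹ * 2 + (2*z₀.1) * ((sz^2)⁻¹ * (2*z₀.1))) := by
    rw [hFG1.fderiv_eq, fderiv_fun_sub hu1d hq1d]
    simp only [ContinuousLinearMap.sub_apply]
    congr 1
    rw [(Q1_hasFDerivAt R z₀ hsne).fderiv]
    simp [pfst, psnd, hszdef, hsdef]
  have hc2 : fderiv ℝ (fun z => fderiv ℝ w z (0, 1)) z₀ (0, 1) =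
      fderiv ℝ (fun z => fderiv ℝ u z (0, 1)) z₀ (0, 1) -
        (sz⁻¹ * 2 + (2*z₀.2) * ((sz^2)⁻¹ * (2*z₀.2))) := by
    rw [hFG2.fderiv_eq, fderiv_fun_sub hu2d hq2d]
    simp only [ContinuousLinearMap.sub_apply]
    congr 1
    rw [(Q2_hasFDerivAt R z₀ hsne).fderiv]
    simp [pfst, psnd, hszdef, hsdef]
  rw [hc1] at h1
  rw [hc2] at h2
  -- lap u z₀ ≤ 4 R² / sz²
  have hsum : lap u z₀ ≤ 4 * R^2 / sz^2 := by
    have hrel : z₀.1^2 + z₀.2^2 = R^2 - sz := by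
      simp only [hszdef, hsdef]; ring
    have : lap u z₀ ≤ (sz⁻¹ * 2 + (2*z₀.1) * ((sz^2)⁻¹ * (2*z₀.1))) +
        (sz⁻¹ * 2 + (2*z₀.2) * ((sz^2)⁻¹ * (2*z₀.2))) := by
      unfold lap; linarith
    refine le_trans this (le_of_eq ?_)
    field_simp
    linear_combination (4 * sz^3) * hrel
  -- compare with value of v
  have hev : δ * Real.exp (2 * v z₀) = 4 * R^2 / sz^2 := by
    have hexpc : Real.exp c = 2 * R / Real.sqrt δ := Real.exp_log (by positivity)
    have hvz : v z₀ = c - Real.log sz := rfl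
    have h2v : Real.exp (2 * v z₀) = (Real.exp c)^2 / sz^2 := by
      rw [hvz, show 2 * (c - Real.log sz) = c + c - (Real.log sz + Real.log sz) by ring,
        Real.exp_sub, Real.exp_add, Real.exp_add, Real.exp_log hszpos]
      ring
    rw [h2v, hexpc, div_pow, Real.sq_sqrt hδ.le]
    field_simp
    ring
  have hle : δ * Real.exp (2 * u z₀) ≤ δ * Real.exp (2 * v z₀) := by
    rw [hev, ← heq z₀]; exact hsum
  have huv : u z₀ ≤ v z₀ := by
    have := (mul_le_mul_iff_right₀ hδ).1 hle
    have := Real.exp_le_exp.1 this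
    linarith
  have hwz₀ : 0 < w z₀ := lt_of_lt_of_le hw0 (hglobal 0 h0U)
  simp only [hwdef] at hwz₀
  linarith

/-- If `u` is smooth on `ℝ²` and solves `−Δu = K₀ e^{2u}` with a negative
constant `K₀`, then the conformal volume `∫_{ℝ²} e^{2u} dz` is infinite. -/
theorem stmt_3 (u : ℝ × ℝ → ℝ) (K₀ : ℝ) (hK : K₀ < 0)
    (hsm : ContDiff ℝ (⊤ : ℕ∞) u)
    (heq : ∀ z, -lap u z = K₀ * Real.exp (2 * u z)) :
    ∫⁻ z, ENNReal.ofReal (Real.exp (2 * u z)) = ⊤ := by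
  exact (liouville_no_solution u (-K₀) (by linarith) hsm
    (fun z => by have h := heq z; linear_combination -h)).elim
end
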